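/- q_0^{(1)} = C_2, and for every Q ∈ P_I(C_2) with Q < 1, P_cor^opt(Q) = (1−Q)·C_2 (equivalently, R_cor^opt(Q) = P_cor^opt(Q)/(1−Q) = C_2). -/

import Mathlib

/-!
Write `q₁ρ₁ = S R₁ S` and `q₂ρ₂ = S R₂ S` with `ρ₀ = S²`. Since `C₁ ≤ C₂` and `C₁ + C₂ > 1`, both
`R₁` and `R₂` lie below `C₂ • 1` in the Loewner order, so `q_iρ_i ≤ C₂ρ₀` and every POVM has
`P_cor ≤ C₂(1 - P_I)`. At `q = C₂` this makes the trivial POVM `(1, 0, 0)` optimal, which gives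
`1 ∈ P_I(C₂)` and pins `P_cor` on every optimal POVM. For `q < C₂`, the projector onto `S⁻¹ν₂`
attains `P_cor = C₂(1 - P_I)` with `P_I < 1`, so it beats every POVM with `P_I = 1`.
-/

open Matrix ComplexOrder

noncomputable section

namespace FRIR

/-- A three-outcome POVM on a qubit: `M₀` is the inconclusive outcome. -/
def IsPOVM (M₀ M₁ M₂ : Matrix (Fin 2) (Fin 2) ℂ) : Prop :=
  M₀.PosSemidef ∧ M₁.PosSemidef ∧ M₂.PosSemidef ∧ M₀ + M₁ + M₂ = 1

/-- `ρ₀ = q₁ρ₁ + q₂ρ₂`. -/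
def rho0 (q₁ q₂ : ℝ) (ρ₁ ρ₂ : Matrix (Fin 2) (Fin 2) ℂ) : Matrix (Fin 2) (Fin 2) ℂ :=
  (q₁ : ℂ) • ρ₁ + (q₂ : ℂ) • ρ₂

/-- The probability of the inconclusive result, `P_I = tr(ρ₀M₀)`. -/
def PIof (q₁ q₂ : ℝ) (ρ₁ ρ₂ M₀ : Matrix (Fin 2) (Fin 2) ℂ) : ℝ :=
  (Matrix.trace (rho0 q₁ q₂ ρ₁ ρ₂ * M₀)).re

/-- `P_cor = q₁tr(ρ₁M₁) + q₂tr(ρ₂M₂)`. -/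
def Pcor (q₁ q₂ : ℝ) (ρ₁ ρ₂ M₁ M₂ : Matrix (Fin 2) (Fin 2) ℂ) : ℝ :=
  q₁ * (Matrix.trace (ρ₁ * M₁)).re + q₂ * (Matrix.trace (ρ₂ * M₂)).re

/-- `P̄_cor = q·tr(ρ₀M₀) + q₁tr(ρ₁M₁) + q₂tr(ρ₂M₂)`. -/
def PbarCor (q q₁ q₂ : ℝ) (ρ₁ ρ₂ M₀ M₁ M₂ : Matrix (Fin 2) (Fin 2) ℂ) : ℝ :=
  q * PIof q₁ q₂ ρ₁ ρ₂ M₀ + Pcor q₁ q₂ ρ₁ ρ₂ M₁ M₂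

/-- `P̄_cor^opt(q)`: the maximal value of `P̄_cor` over all POVMs. -/
def PbarOpt (q q₁ q₂ : ℝ) (ρ₁ ρ₂ : Matrix (Fin 2) (Fin 2) ℂ) : ℝ :=
  sSup {x : ℝ | ∃ M₀ M₁ M₂, IsPOVM M₀ M₁ M₂ ∧ PbarCor q q₁ q₂ ρ₁ ρ₂ M₀ M₁ M₂ = x}

/-- `P_cor^opt(Q)`: the maximal value of `P_cor` over POVMs with `P_I = Q`. -/
def PcorOpt (Q q₁ q₂ : ℝ) (ρ₁ ρ₂ : Matrix (Fin 2) (Fin 2) ℂ) : ℝ :=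
  sSup {x : ℝ | ∃ M₀ M₁ M₂, IsPOVM M₀ M₁ M₂ ∧
    PIof q₁ q₂ ρ₁ ρ₂ M₀ = Q ∧ Pcor q₁ q₂ ρ₁ ρ₂ M₁ M₂ = x}

/-- `P_I(q) = { tr(ρ₀M₀) : POVMs attaining P̄_cor^opt(q) }`. -/
def PIset (q q₁ q₂ : ℝ) (ρ₁ ρ₂ : Matrix (Fin 2) (Fin 2) ℂ) : Set ℝ :=
  {Q : ℝ | ∃ M₀ M₁ M₂, IsPOVM M₀ M₁ M₂ ∧
    PbarCor q q₁ q₂ ρ₁ ρ₂ M₀ M₁ M₂ = PbarOpt q q₁ q₂ ρ₁ ρ₂ ∧ PIof q₁ q₂ ρ₁ ρ₂ M₀ = Q}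

/-- `q₀⁽⁰⁾ = sup{q > 0 : 0 ∈ P_I(q)}`. -/
def q0low (q₁ q₂ : ℝ) (ρ₁ ρ₂ : Matrix (Fin 2) (Fin 2) ℂ) : ℝ :=
  sSup {q : ℝ | 0 < q ∧ (0 : ℝ) ∈ PIset q q₁ q₂ ρ₁ ρ₂}

/-- `q₀⁽¹⁾ = inf{q > 0 : 1 ∈ P_I(q)}`. -/
def q0high (q₁ q₂ : ℝ) (ρ₁ ρ₂ : Matrix (Fin 2) (Fin 2) ℂ) : ℝ :=
  sInf {q : ℝ | 0 < q ∧ (1 : ℝ) ∈ PIset q q₁ q₂ ρ₁ ρ₂}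

end FRIR

open scoped MatrixOrder

namespace Matrix

section StarRing

variable {R n : Type*} [CommRing R] [StarRing R] [Fintype n]

theorem trace_mul_vecMulVec_star (A : Matrix n n R) (w : n → R) :
    (A * vecMulVec w (star w)).trace = star w ⬝ᵥ (A *ᵥ w) := by
  rw [mul_vecMulVec, trace_vecMulVec, dotProduct_comm]

theorem star_dotProduct_conj_mulVec {S : Matrix n n R} (hS : IsSelfAdjoint S)
    (A : Matrix n n R) (w : n → R) :
    star w ⬝ᵥ ((S * A * S) *ᵥ w) = star (S *ᵥ w) ⬝ᵥ (A *ᵥ (S *ᵥ w)) := by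
  rw [← mulVec_mulVec, ← mulVec_mulVec, dotProduct_mulVec, star_mulVec, show Sᴴ = S from hS]

end StarRing

theorem re_trace_smul_mul {n : Type*} [Fintype n] (r : ℝ) (A M : Matrix n n ℂ) :
    ((r : ℂ) • A * M).trace.re = r * (A * M).trace.re := by
  rw [smul_mul, trace_smul, smul_eq_mul, Complex.re_ofReal_mul]

variable {𝕜 n : Type*} [RCLike 𝕜] [Fintype n] [DecidableEq n]

theorem trace_mul_nonneg {A M : Matrix n n 𝕜} (hA : 0 ≤ A) (hM : 0 ≤ M) :
    0 ≤ (A * M).trace := by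
  have hconj := star_left_conjugate_nonneg hA (CFC.sqrt M)
  rw [(CFC.sqrt_nonneg M).isSelfAdjoint.star_eq] at hconj
  rw [← CFC.sqrt_mul_sqrt_self M hM, ← mul_assoc, trace_mul_comm, ← mul_assoc]
  exact (nonneg_iff_posSemidef.mp hconj).trace_nonneg

theorem trace_mul_le_trace_mul {A B M : Matrix n n 𝕜} (hAB : A ≤ B) (hM : 0 ≤ M) :
    (A * M).trace ≤ (B * M).trace := by
  rw [← sub_nonneg, ← trace_sub, ← sub_mul]
  exact trace_mul_nonneg (sub_nonneg.mpr hAB) hM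

theorem conj_le_smul_mul_self {S A : Matrix n n 𝕜} (hS : IsSelfAdjoint S) {c : 𝕜}
    (hA : A ≤ c • 1) : S * A * S ≤ c • (S * S) := by
  simpa [hS.star_eq] using star_left_conjugate_le_conjugate hA S

theorem sum_vecMulVec_star_eq_one {v : n → n → 𝕜}
    (hv : ∀ i j, star (v i) ⬝ᵥ v j = if i = j then 1 else 0) :
    ∑ i, vecMulVec (v i) (star (v i)) = 1 := by
  set U : Matrix n n 𝕜 := of fun a i => v i a
  have hU : Uᴴ * U = 1 := by
    ext i j
    simpa [U, mul_apply, dotProduct, one_apply] using hv i j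
  ext a b
  simpa [U, mul_apply, vecMulVec_apply, Matrix.sum_apply] using
    congrArg (· a b) (mul_eq_one_comm.mp hU)

theorem vecMulVec_add_vecMulVec_eq_one {u v : Fin 2 → 𝕜} (hu : star u ⬝ᵥ u = 1)
    (hv : star v ⬝ᵥ v = 1) (huv : star u ⬝ᵥ v = 0) :
    vecMulVec u (star u) + vecMulVec v (star v) = 1 := by
  have hvu : star v ⬝ᵥ u = 0 := by
    rw [star_dotProduct, huv, star_zero]
  simpa [Fin.sum_univ_two] using sum_vecMulVec_star_eq_one (v := ![u, v]) (by
    intro i j; fin_cases i <;> fin_cases j <;> simp [hu, hv, huv, hvu])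

theorem smul_vecMulVec_add_smul_vecMulVec_le {u v : n → 𝕜}
    (huv : vecMulVec u (star u) + vecMulVec v (star v) = 1) {a b c : ℝ} (ha : a ≤ c)
    (hb : b ≤ c) :
    (a : 𝕜) • vecMulVec u (star u) + (b : 𝕜) • vecMulVec v (star v) ≤ (c : 𝕜) • 1 := by
  have hdiff : (c : 𝕜) • 1 - ((a : 𝕜) • vecMulVec u (star u) + (b : 𝕜) • vecMulVec v (star v))
      = ((c - a : ℝ) : 𝕜) • vecMulVec u (star u) + ((c - b : ℝ) : 𝕜) • vecMulVec v (star v) := by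
    rw [← huv]; push_cast; module
  rw [le_iff, hdiff]
  exact ((posSemidef_vecMulVec_self_star u).smul (RCLike.ofReal_nonneg.mpr (by linarith))).add
    ((posSemidef_vecMulVec_self_star v).smul (RCLike.ofReal_nonneg.mpr (by linarith)))

theorem isStarProjection_inv_smul_vecMulVec {w : n → 𝕜} (hw : w ≠ 0) :
    IsStarProjection ((star w ⬝ᵥ w)⁻¹ • vecMulVec w (star w)) := by
  have hpos : 0 < star w ⬝ᵥ w := dotProduct_star_self_pos_iff.mpr hw
  refine ⟨?_, ((posSemidef_vecMulVec_self_star w).smul (Right.inv_pos.mpr hpos).le).isHermitian⟩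
  rw [IsIdempotentElem, smul_mul_smul_comm, vecMulVec_mul_vecMulVec, vecMulVec_smul, smul_smul,
    mul_assoc, inv_mul_cancel₀ hpos.ne', mul_one]

end Matrix

namespace FRIR

variable {q q₁ q₂ c : ℝ} {ρ₁ ρ₂ M₀ M₁ M₂ : Matrix (Fin 2) (Fin 2) ℂ}

theorem trace_rho0 (hq : q₁ + q₂ = 1) (htr₁ : ρ₁.trace = 1) (htr₂ : ρ₂.trace = 1) :
    (rho0 q₁ q₂ ρ₁ ρ₂).trace = 1 := by
  rw [rho0, trace_add, trace_smul, trace_smul, htr₁, htr₂, smul_eq_mul, smul_eq_mul, mul_one,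
    mul_one, ← Complex.ofReal_add, hq, Complex.ofReal_one]

theorem PIof_add_re_trace (htr : (rho0 q₁ q₂ ρ₁ ρ₂).trace = 1) (hM : IsPOVM M₀ M₁ M₂) :
    PIof q₁ q₂ ρ₁ ρ₂ M₀ + (rho0 q₁ q₂ ρ₁ ρ₂ * M₁).trace.re
      + (rho0 q₁ q₂ ρ₁ ρ₂ * M₂).trace.re = 1 := by
  rw [PIof, ← Complex.add_re, ← Complex.add_re, ← trace_add, ← trace_add, ← mul_add, ← mul_add,
    hM.2.2.2, mul_one, htr, Complex.one_re]

theorem PIof_nonneg (hρ : 0 ≤ rho0 q₁ q₂ ρ₁ ρ₂) (hM₀ : M₀.PosSemidef) :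
    0 ≤ PIof q₁ q₂ ρ₁ ρ₂ M₀ :=
  (Complex.le_def.mp (trace_mul_nonneg hρ (nonneg_iff_posSemidef.mpr hM₀))).1

theorem PIof_le_one (htr : (rho0 q₁ q₂ ρ₁ ρ₂).trace = 1) (hρ : 0 ≤ rho0 q₁ q₂ ρ₁ ρ₂)
    (hM : IsPOVM M₀ M₁ M₂) : PIof q₁ q₂ ρ₁ ρ₂ M₀ ≤ 1 := by
  have h₁ := PIof_nonneg hρ hM.2.1
  have h₂ := PIof_nonneg hρ hM.2.2.1
  have := PIof_add_re_trace htr hM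
  rw [PIof] at h₁ h₂
  linarith

theorem Pcor_le (htr : (rho0 q₁ q₂ ρ₁ ρ₂).trace = 1)
    (h₁ : (q₁ : ℂ) • ρ₁ ≤ (c : ℂ) • rho0 q₁ q₂ ρ₁ ρ₂)
    (h₂ : (q₂ : ℂ) • ρ₂ ≤ (c : ℂ) • rho0 q₁ q₂ ρ₁ ρ₂) (hM : IsPOVM M₀ M₁ M₂) :
    Pcor q₁ q₂ ρ₁ ρ₂ M₁ M₂ ≤ c * (1 - PIof q₁ q₂ ρ₁ ρ₂ M₀) := by
  have hle₁ := (Complex.le_def.mp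
    (trace_mul_le_trace_mul h₁ (nonneg_iff_posSemidef.mpr hM.2.1))).1
  have hle₂ := (Complex.le_def.mp
    (trace_mul_le_trace_mul h₂ (nonneg_iff_posSemidef.mpr hM.2.2.1))).1
  rw [re_trace_smul_mul, re_trace_smul_mul] at hle₁ hle₂
  have hsum : 1 - PIof q₁ q₂ ρ₁ ρ₂ M₀
      = (rho0 q₁ q₂ ρ₁ ρ₂ * M₁).trace.re + (rho0 q₁ q₂ ρ₁ ρ₂ * M₂).trace.re := by
    linarith [PIof_add_re_trace htr hM]
  rw [Pcor, hsum, mul_add]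
  linarith

theorem isPOVM_one_zero_zero : IsPOVM 1 0 0 :=
  ⟨PosSemidef.one, PosSemidef.zero, PosSemidef.zero, by simp⟩

theorem PbarCor_one_zero_zero (htr : (rho0 q₁ q₂ ρ₁ ρ₂).trace = 1) :
    PbarCor q q₁ q₂ ρ₁ ρ₂ 1 0 0 = q := by
  simp [PbarCor, PIof, Pcor, htr]

theorem bddAbove_PbarCor (htr : (rho0 q₁ q₂ ρ₁ ρ₂).trace = 1) (hρ : 0 ≤ rho0 q₁ q₂ ρ₁ ρ₂)
    (h₁ : (q₁ : ℂ) • ρ₁ ≤ (c : ℂ) • rho0 q₁ q₂ ρ₁ ρ₂)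
    (h₂ : (q₂ : ℂ) • ρ₂ ≤ (c : ℂ) • rho0 q₁ q₂ ρ₁ ρ₂) :
    BddAbove {x | ∃ M₀ M₁ M₂, IsPOVM M₀ M₁ M₂ ∧ PbarCor q q₁ q₂ ρ₁ ρ₂ M₀ M₁ M₂ = x} := by
  refine ⟨max q c, ?_⟩
  rintro x ⟨M₀, M₁, M₂, hM, rfl⟩
  have hPcor := Pcor_le htr h₁ h₂ hM
  have hPI₀ := PIof_nonneg hρ hM.1
  have hPI₁ := PIof_le_one htr hρ hM
  rw [PbarCor]
  nlinarith [le_max_left q c, le_max_right q c]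

theorem PbarOpt_eq_self (htr : (rho0 q₁ q₂ ρ₁ ρ₂).trace = 1)
    (h₁ : (q₁ : ℂ) • ρ₁ ≤ (c : ℂ) • rho0 q₁ q₂ ρ₁ ρ₂)
    (h₂ : (q₂ : ℂ) • ρ₂ ≤ (c : ℂ) • rho0 q₁ q₂ ρ₁ ρ₂) :
    PbarOpt c q₁ q₂ ρ₁ ρ₂ = c := by
  refine IsGreatest.csSup_eq ⟨⟨1, 0, 0, isPOVM_one_zero_zero, PbarCor_one_zero_zero htr⟩, ?_⟩
  rintro x ⟨M₀, M₁, M₂, hM, rfl⟩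
  have := Pcor_le htr h₁ h₂ hM
  rw [PbarCor]
  linarith

theorem PcorOpt_eq_of_mem_PIset (htr : (rho0 q₁ q₂ ρ₁ ρ₂).trace = 1)
    (h₁ : (q₁ : ℂ) • ρ₁ ≤ (c : ℂ) • rho0 q₁ q₂ ρ₁ ρ₂)
    (h₂ : (q₂ : ℂ) • ρ₂ ≤ (c : ℂ) • rho0 q₁ q₂ ρ₁ ρ₂) {Q : ℝ}
    (hQ : Q ∈ PIset c q₁ q₂ ρ₁ ρ₂) :
    PcorOpt Q q₁ q₂ ρ₁ ρ₂ = (1 - Q) * c := by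
  obtain ⟨M₀, M₁, M₂, hM, hopt, rfl⟩ := hQ
  rw [PbarOpt_eq_self htr h₁ h₂, PbarCor] at hopt
  refine IsGreatest.csSup_eq ⟨⟨M₀, M₁, M₂, hM, rfl, by linarith⟩, ?_⟩
  rintro x ⟨N₀, N₁, N₂, hN, hPI, rfl⟩
  have hPcor := Pcor_le htr h₁ h₂ hN
  rw [hPI] at hPcor
  linarith

theorem le_of_one_mem_PIset (htr : (rho0 q₁ q₂ ρ₁ ρ₂).trace = 1) (hρ : 0 ≤ rho0 q₁ q₂ ρ₁ ρ₂)
    (h₁ : (q₁ : ℂ) • ρ₁ ≤ (c : ℂ) • rho0 q₁ q₂ ρ₁ ρ₂)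
    (h₂ : (q₂ : ℂ) • ρ₂ ≤ (c : ℂ) • rho0 q₁ q₂ ρ₁ ρ₂)
    (hatt : ∃ N₀ N₁ N₂, IsPOVM N₀ N₁ N₂ ∧ PIof q₁ q₂ ρ₁ ρ₂ N₀ < 1 ∧
      Pcor q₁ q₂ ρ₁ ρ₂ N₁ N₂ = c * (1 - PIof q₁ q₂ ρ₁ ρ₂ N₀))
    (hq : 1 ∈ PIset q q₁ q₂ ρ₁ ρ₂) : c ≤ q := by
  obtain ⟨M₀, M₁, M₂, hM, hopt, hPI⟩ := hq
  obtain ⟨N₀, N₁, N₂, hN, hPIN, hPcorN⟩ := hatt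
  have hoptN : PbarCor q q₁ q₂ ρ₁ ρ₂ N₀ N₁ N₂ ≤ PbarOpt q q₁ q₂ ρ₁ ρ₂ :=
    le_csSup (bddAbove_PbarCor htr hρ h₁ h₂) ⟨N₀, N₁, N₂, hN, rfl⟩
  have hPcorM := Pcor_le htr h₁ h₂ hM
  rw [← hopt, PbarCor, PbarCor, hPcorN, hPI] at hoptN
  rw [hPI] at hPcorM
  have hgap : (c - q) * (1 - PIof q₁ q₂ ρ₁ ρ₂ N₀) ≤ 0 := by linarith
  by_contra! hlt
  exact hgap.not_gt (mul_pos (sub_pos.mpr hlt) (sub_pos.mpr hPIN))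

theorem q0high_eq (htr : (rho0 q₁ q₂ ρ₁ ρ₂).trace = 1) (hρ : 0 ≤ rho0 q₁ q₂ ρ₁ ρ₂)
    (hc : 0 < c) (h₁ : (q₁ : ℂ) • ρ₁ ≤ (c : ℂ) • rho0 q₁ q₂ ρ₁ ρ₂)
    (h₂ : (q₂ : ℂ) • ρ₂ ≤ (c : ℂ) • rho0 q₁ q₂ ρ₁ ρ₂)
    (hatt : ∃ N₀ N₁ N₂, IsPOVM N₀ N₁ N₂ ∧ PIof q₁ q₂ ρ₁ ρ₂ N₀ < 1 ∧
      Pcor q₁ q₂ ρ₁ ρ₂ N₁ N₂ = c * (1 - PIof q₁ q₂ ρ₁ ρ₂ N₀)) :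
    q0high q₁ q₂ ρ₁ ρ₂ = c := by
  have hmem : c ∈ {q | 0 < q ∧ (1 : ℝ) ∈ PIset q q₁ q₂ ρ₁ ρ₂} :=
    ⟨hc, 1, 0, 0, isPOVM_one_zero_zero,
      by rw [PbarCor_one_zero_zero htr, PbarOpt_eq_self htr h₁ h₂],
      by simp [PIof, htr]⟩
  exact IsLeast.csInf_eq ⟨hmem, fun q hq => le_of_one_mem_PIset htr hρ h₁ h₂ hatt hq.2⟩

/-- The witness is the projector onto `S⁻¹ν`. -/
theorem exists_isPOVM_Pcor_eq (htr : (rho0 q₁ q₂ ρ₁ ρ₂).trace = 1)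
    {S R : Matrix (Fin 2) (Fin 2) ℂ} (hS : IsSelfAdjoint S) (hSunit : IsUnit S)
    (hSS : S * S = rho0 q₁ q₂ ρ₁ ρ₂) (hSRS : S * R * S = (q₂ : ℂ) • ρ₂) {ν : Fin 2 → ℂ}
    (hν : star ν ⬝ᵥ ν = 1) (hRν : R *ᵥ ν = (c : ℂ) • ν) :
    ∃ N₀ N₁ N₂, IsPOVM N₀ N₁ N₂ ∧ PIof q₁ q₂ ρ₁ ρ₂ N₀ < 1 ∧
      Pcor q₁ q₂ ρ₁ ρ₂ N₁ N₂ = c * (1 - PIof q₁ q₂ ρ₁ ρ₂ N₀) := by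
  obtain ⟨w, hw⟩ := mulVec_surjective_iff_isUnit.mpr hSunit ν
  have hw0 : w ≠ 0 := by
    rintro rfl
    simp [← hw] at hν
  set t := (star w ⬝ᵥ w)⁻¹
  have ht : 0 < t.re :=
    (Complex.lt_def.mp (Right.inv_pos.mpr (dotProduct_star_self_pos_iff.mpr hw0))).1
  have hN := isStarProjection_inv_smul_vecMulVec hw0
  set N := t • vecMulVec w (star w)
  have hSSw : star w ⬝ᵥ ((S * S) *ᵥ w) = star (S *ᵥ w) ⬝ᵥ (S *ᵥ w) := by
    simpa using star_dotProduct_conj_mulVec hS 1 w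
  have htrN : (rho0 q₁ q₂ ρ₁ ρ₂ * N).trace = t := by
    rw [Matrix.mul_smul, trace_smul, trace_mul_vecMulVec_star, ← hSS, hSSw, hw, hν, smul_eq_mul,
      mul_one]
  have htrρN : ((q₂ : ℂ) • ρ₂ * N).trace = t * c := by
    rw [Matrix.mul_smul, trace_smul, trace_mul_vecMulVec_star, ← hSRS,
      star_dotProduct_conj_mulVec hS, hw, hRν, dotProduct_smul, hν, smul_eq_mul, smul_eq_mul,
      mul_one]
  have hPI : PIof q₁ q₂ ρ₁ ρ₂ (1 - N) = 1 - t.re := by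
    rw [PIof, mul_sub, mul_one, trace_sub, htr, htrN, Complex.sub_re, Complex.one_re]
  have hPcor : Pcor q₁ q₂ ρ₁ ρ₂ 0 N = c * t.re := by
    rw [Pcor, mul_zero, trace_zero, Complex.zero_re, mul_zero, zero_add, ← re_trace_smul_mul,
      htrρN, mul_comm, Complex.re_ofReal_mul]
  refine ⟨1 - N, 0, N, ⟨nonneg_iff_posSemidef.mp hN.one_sub_nonneg, PosSemidef.zero,
    nonneg_iff_posSemidef.mp hN.nonneg, by simp⟩, ?_, ?_⟩
  · rw [hPI]
    linarith
  · rw [hPI, hPcor]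
    ring

theorem stmt7_general
    (q₁ q₂ : ℝ) (ρ₁ ρ₂ : Matrix (Fin 2) (Fin 2) ℂ)
    (hq : q₁ + q₂ = 1)
    (htr₁ : ρ₁.trace = 1)
    (htr₂ : ρ₂.trace = 1)
    (hρ0 : (rho0 q₁ q₂ ρ₁ ρ₂).PosDef)
    (S : Matrix (Fin 2) (Fin 2) ℂ) (hS : S.PosSemidef) (hSS : S * S = rho0 q₁ q₂ ρ₁ ρ₂)
    (ν₁ ν₂ : Fin 2 → ℂ)
    (hν₁ : star ν₁ ⬝ᵥ ν₁ = 1) (hν₂ : star ν₂ ⬝ᵥ ν₂ = 1) (hν₁₂ : star ν₁ ⬝ᵥ ν₂ = 0)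
    (C₁ C₂ : ℝ) (hC12 : C₁ ≤ C₂) (hCsum : 1 < C₁ + C₂)
    (hbar₁ : S * ((C₁ : ℂ) • vecMulVec ν₁ (star ν₁)
        + ((1 - C₂ : ℝ) : ℂ) • vecMulVec ν₂ (star ν₂)) * S = (q₁ : ℂ) • ρ₁)
    (hbar₂ : S * (((1 - C₁ : ℝ) : ℂ) • vecMulVec ν₁ (star ν₁)
        + (C₂ : ℂ) • vecMulVec ν₂ (star ν₂)) * S = (q₂ : ℂ) • ρ₂)
    :
    q0high q₁ q₂ ρ₁ ρ₂ = C₂ ∧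
      ∀ Q ∈ PIset C₂ q₁ q₂ ρ₁ ρ₂, Q < 1 →
        PcorOpt Q q₁ q₂ ρ₁ ρ₂ = (1 - Q) * C₂ := by
  have htr := trace_rho0 hq htr₁ htr₂
  have hres := vecMulVec_add_vecMulVec_eq_one hν₁ hν₂ hν₁₂
  have hSa : IsSelfAdjoint S := hS.isHermitian
  have h₁ : (q₁ : ℂ) • ρ₁ ≤ (C₂ : ℂ) • rho0 q₁ q₂ ρ₁ ρ₂ := by
    rw [← hbar₁, ← hSS]
    exact conj_le_smul_mul_self hSa (smul_vecMulVec_add_smul_vecMulVec_le hres hC12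
      (show 1 - C₂ ≤ C₂ by linarith))
  have h₂ : (q₂ : ℂ) • ρ₂ ≤ (C₂ : ℂ) • rho0 q₁ q₂ ρ₁ ρ₂ := by
    rw [← hbar₂, ← hSS]
    exact conj_le_smul_mul_self hSa (smul_vecMulVec_add_smul_vecMulVec_le hres
      (show 1 - C₁ ≤ C₂ by linarith) le_rfl)
  have hSunit : IsUnit S := isUnit_of_mul_isUnit_left (hSS ▸ hρ0.isUnit)
  have hRν₂ : (((1 - C₁ : ℝ) : ℂ) • vecMulVec ν₁ (star ν₁) + (C₂ : ℂ) • vecMulVec ν₂ (star ν₂))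
      *ᵥ ν₂ = (C₂ : ℂ) • ν₂ := by
    simp [add_mulVec, smul_mulVec, vecMulVec_mulVec, hν₁₂, hν₂]
  have hatt := exists_isPOVM_Pcor_eq htr hSa hSunit hSS hbar₂ hν₂ hRν₂
  have hρ : 0 ≤ rho0 q₁ q₂ ρ₁ ρ₂ := nonneg_iff_posSemidef.mpr hρ0.posSemidef
  exact ⟨q0high_eq htr hρ (by linarith) h₁ h₂ hatt,
    fun Q hQ _ => PcorOpt_eq_of_mem_PIset htr h₁ h₂ hQ⟩

/-- `q₀⁽¹⁾ = C₂`, and for every `Q ∈ P_I(C₂)` with `Q < 1`,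
`P_cor^opt(Q) = (1−Q)·C₂`, i.e. `R_cor^opt(Q) = C₂`. -/
theorem stmt7
    (q₁ q₂ : ℝ) (ρ₁ ρ₂ : Matrix (Fin 2) (Fin 2) ℂ)
    (hq₁ : 0 < q₁) (hq₂ : 0 < q₂) (hq : q₁ + q₂ = 1)
    (hρ₁ : ρ₁.PosSemidef) (htr₁ : ρ₁.trace = 1)
    (hρ₂ : ρ₂.PosSemidef) (htr₂ : ρ₂.trace = 1)
    (hρ0 : (rho0 q₁ q₂ ρ₁ ρ₂).PosDef)
    (S : Matrix (Fin 2) (Fin 2) ℂ) (hS : S.PosSemidef) (hSS : S * S = rho0 q₁ q₂ ρ₁ ρ₂)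
    (ν₁ ν₂ : Fin 2 → ℂ)
    (hν₁ : star ν₁ ⬝ᵥ ν₁ = 1) (hν₂ : star ν₂ ⬝ᵥ ν₂ = 1) (hν₁₂ : star ν₁ ⬝ᵥ ν₂ = 0)
    (C₁ C₂ : ℝ) (hC12 : C₁ ≤ C₂) (hCsum : 1 < C₁ + C₂)
    (hbar₁ : S * ((C₁ : ℂ) • vecMulVec ν₁ (star ν₁)
        + ((1 - C₂ : ℝ) : ℂ) • vecMulVec ν₂ (star ν₂)) * S = (q₁ : ℂ) • ρ₁)
    (hbar₂ : S * (((1 - C₁ : ℝ) : ℂ) • vecMulVec ν₁ (star ν₁)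
        + (C₂ : ℂ) • vecMulVec ν₂ (star ν₂)) * S = (q₂ : ℂ) • ρ₂)
    :
    q0high q₁ q₂ ρ₁ ρ₂ = C₂ ∧
      ∀ Q ∈ PIset C₂ q₁ q₂ ρ₁ ρ₂, Q < 1 →
        PcorOpt Q q₁ q₂ ρ₁ ρ₂ = (1 - Q) * C₂ :=
  stmt7_general q₁ q₂ ρ₁ ρ₂ hq htr₁ htr₂ hρ0 S hS hSS ν₁ ν₂ hν₁ hν₂ hν₁₂ C₁ C₂ hC12 hCsum hbar₁
    hbar₂

end FRIR
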